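/- arXiv:2409.18820 — 4 statements merged into one kernel-verified Lean document; each statement's English description precedes it below -/
import Mathlib

section
/- Let G be a simple graph containing an induced odd cycle C, and let v ∈ V(G) ∖ V(C) be a vertex having at least two neighbors on C. Then there is a subpath P of C whose two endpoints are neighbors of v, none of whose internal vertices is a neighbor of v, and whose number of vertices is even; consequently the vertex set V(P) ∪ {v} induces an odd cycle in G. -/
/-!
Cutting the odd cycle at two neighbours `x ≠ y` of `v` yields two `x`–`y` arcs whose lengths
add up to the odd length of the cycle, so one arc has odd length. An interior neighbour of `v`
on an odd path between neighbours of `v` splits it into two shorter such paths, one of them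
again odd; descending this way ends at an odd subpath with no interior neighbour of `v`, i.e.
one with an even number of vertices. Closing it through `v` adds two edges: an odd cycle.
-/

namespace SimpleGraph.Walk

variable {V : Type*} {G : SimpleGraph V}

theorem exists_odd_isSubwalk_between_neighbors [DecidableEq V] {v a b : V} (q : G.Walk a b)
    (ha : G.Adj v a) (hb : G.Adj v b) (hodd : Odd q.length) :
    ∃ (x y : V) (p : G.Walk x y), p.IsSubwalk q ∧ G.Adj v x ∧ G.Adj v y ∧
      (∀ z ∈ p.support, z ≠ x → z ≠ y → ¬ G.Adj v z) ∧ Odd p.length := by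
  by_cases hz : ∃ z ∈ q.support, z ≠ a ∧ z ≠ b ∧ G.Adj v z
  · obtain ⟨z, hzq, hza, hzb, hvz⟩ := hz
    have hsplit : (q.takeUntil z hzq).length + (q.dropUntil z hzq).length = q.length := by
      rw [← length_append, take_spec]
    -- `htake` and `hdrop` discharge the termination goals of the two recursive calls.
    have htake : 0 < (q.takeUntil z hzq).length :=
      Nat.pos_of_ne_zero fun h => hza (eq_of_length_eq_zero h).symm
    have hdrop : 0 < (q.dropUntil z hzq).length :=
      Nat.pos_of_ne_zero fun h => hzb (eq_of_length_eq_zero h)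
    rcases Nat.even_or_odd (q.takeUntil z hzq).length with heven | htodd
    · have hdodd : Odd (q.dropUntil z hzq).length := by
        rw [← hsplit, Nat.odd_add'] at hodd
        exact hodd.mpr heven
      obtain ⟨x, y, p, hp, rest⟩ :=
        (q.dropUntil z hzq).exists_odd_isSubwalk_between_neighbors hvz hb hdodd
      exact ⟨x, y, p, hp.trans (q.isSubwalk_dropUntil hzq), rest⟩
    · obtain ⟨x, y, p, hp, rest⟩ :=
        (q.takeUntil z hzq).exists_odd_isSubwalk_between_neighbors ha hvz htodd
      exact ⟨x, y, p, hp.trans (q.isSubwalk_takeUntil hzq), rest⟩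
  · push Not at hz
    exact ⟨a, b, q, isSubwalk_rfl q, ha, hb, hz, hodd⟩
termination_by q.length

theorem IsCycle.exists_isPath_odd_length [DecidableEq V] {u x y : V} {c : G.Walk u u}
    (hc : c.IsCycle) (hodd : Odd c.length) (hx : x ∈ c.support) (hy : y ∈ c.support)
    (hxy : x ≠ y) :
    ∃ p : G.Walk x y, p.IsPath ∧ p.edges ⊆ c.edges ∧ p.support ⊆ c.support ∧
      Odd p.length := by
  set c' := c.rotate x hx
  have hc' : c'.IsCycle := hc.rotate hx
  have hy' : y ∈ c'.support := (c.mem_support_rotate_iff x hx).mpr hy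
  have hedges : c'.edges ⊆ c.edges := fun e he => (c.rotate_edges x hx).mem_iff.mp he
  have hsupport : c'.support ⊆ c.support := fun z hz => (c.mem_support_rotate_iff x hx).mp hz
  have hsplit : (c'.takeUntil y hy').length + (c'.dropUntil y hy').length = c.length := by
    rw [← length_append, take_spec, length_rotate]
  rcases Nat.even_or_odd (c'.takeUntil y hy').length with heven | htodd
  · have hdodd : Odd (c'.dropUntil y hy').length := by
      rw [← hsplit, Nat.odd_add'] at hodd
      exact hodd.mpr heven
    have hpath : (c'.dropUntil y hy').IsPath := by
      refine IsCycle.isPath_of_append_right (p := c'.takeUntil y hy') (not_nil_of_ne hxy) ?_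
      rwa [take_spec]
    have hsub := c'.isSubwalk_dropUntil hy'
    refine ⟨(c'.dropUntil y hy').reverse, hpath.reverse, ?_, ?_, by rwa [length_reverse]⟩
    · intro e he
      rw [edges_reverse, List.mem_reverse] at he
      exact hedges (hsub.edges_subset he)
    · intro z hz
      rw [support_reverse, List.mem_reverse] at hz
      exact hsupport (hsub.support_subset hz)
  · have hsub := c'.isSubwalk_takeUntil hy'
    exact ⟨c'.takeUntil y hy', hc'.isPath_takeUntil hy',
      List.Subset.trans hsub.edges_subset hedges,
      List.Subset.trans hsub.support_subset hsupport, htodd⟩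

theorem IsPath.isCycle_cons_concat {v a b : V} {p : G.Walk a b} (hp : p.IsPath)
    (hv : v ∉ p.support) (ha : G.Adj v a) (hb : G.Adj v b) (hlen : 0 < p.length) :
    (cons ha (p.concat hb.symm)).IsCycle := by
  have hab : a ≠ b := by
    rintro rfl
    exact (not_nil_iff_lt_length.mpr hlen) (hp.nil_iff_eq.mpr rfl)
  refine (cons_isCycle_iff _ ha).mpr ⟨hp.concat hv hb.symm, ?_⟩
  rw [edges_concat, List.concat_eq_append, List.mem_append, List.mem_singleton, Sym2.eq_iff]
  rintro (he | ⟨hvb, -⟩ | ⟨-, hab'⟩)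
  · exact hv (p.fst_mem_support_of_mem_edges he)
  · exact hv (hvb ▸ p.end_mem_support)
  · exact hab hab'

end SimpleGraph.Walk

theorem odd_cheese_general
    {V : Type*} (G : SimpleGraph V) (u : V) (c : G.Walk u u)
    (hc : c.IsCycle) (hodd : Odd c.length)
    (v : V) (hv : v ∉ c.support)
    (htwo : ∃ x ∈ c.support, ∃ y ∈ c.support, x ≠ y ∧ G.Adj v x ∧ G.Adj v y) :
    ∃ (x y : V) (p : G.Walk x y), p.IsPath ∧ (∀ e ∈ p.edges, e ∈ c.edges) ∧
      G.Adj v x ∧ G.Adj v y ∧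
      (∀ z ∈ p.support, z ≠ x → z ≠ y → ¬ G.Adj v z) ∧
      Even p.support.length ∧
      ∃ c' : G.Walk v v, c'.IsCycle ∧ Odd c'.length ∧
        (∀ z, z ∈ c'.support ↔ z = v ∨ z ∈ p.support) := by
  classical
  obtain ⟨x, hx, y, hy, hxy, hvx, hvy⟩ := htwo
  obtain ⟨q, hq, hqedges, hqsupport, hqodd⟩ := hc.exists_isPath_odd_length hodd hx hy hxy
  obtain ⟨a, b, p, hpq, hva, hvb, hinterior, hpodd⟩ :=
    q.exists_odd_isSubwalk_between_neighbors hvx hvy hqodd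
  have hp : p.IsPath := SimpleGraph.Walk.isPath_of_isSubwalk hpq hq
  have hvp : v ∉ p.support := fun h => hv (hqsupport (hpq.support_subset h))
  refine ⟨a, b, p, hp, fun e he => hqedges (hpq.edges_subset he), hva, hvb, hinterior,
    by simpa [SimpleGraph.Walk.length_support, Nat.even_add_one] using hpodd,
    SimpleGraph.Walk.cons hva (p.concat hvb.symm),
    hp.isCycle_cons_concat hvp hva hvb hpodd.pos, ?_, fun z => ?_⟩
  · simpa [Nat.odd_add_one] using hpodd
  · simp [SimpleGraph.Walk.support_concat, or_comm]

/-- If `G` has an induced odd cycle `C` and a vertex `v` outside `C`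
with at least two neighbors on `C`, then some subpath `P` of `C` has both endpoints
adjacent to `v`, no internal vertex adjacent to `v`, and an even number of vertices;
consequently `V(P) ∪ {v}` carries an odd cycle of `G`. -/
theorem odd_cheese
    {V : Type*} (G : SimpleGraph V) (u : V) (c : G.Walk u u)
    (hc : c.IsCycle) (hodd : Odd c.length)
    (hind : ∀ x ∈ c.support, ∀ y ∈ c.support, G.Adj x y → s(x, y) ∈ c.edges)
    (v : V) (hv : v ∉ c.support)
    (htwo : ∃ x ∈ c.support, ∃ y ∈ c.support, x ≠ y ∧ G.Adj v x ∧ G.Adj v y) :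
    ∃ (x y : V) (p : G.Walk x y), p.IsPath ∧ (∀ e ∈ p.edges, e ∈ c.edges) ∧
      G.Adj v x ∧ G.Adj v y ∧
      (∀ z ∈ p.support, z ≠ x → z ≠ y → ¬ G.Adj v z) ∧
      Even p.support.length ∧
      ∃ c' : G.Walk v v, c'.IsCycle ∧ Odd c'.length ∧
        (∀ z, z ∈ c'.support ↔ z = v ∨ z ∈ p.support) :=
  odd_cheese_general G u c hc hodd v hv htwo
end

section
/- Let G be a simple graph, v a vertex of G, and r a positive integer. If the subgraph of G induced by the ball N^{≤r}(v) of all vertices at distance at most r from v contains an odd cycle, then the subgraph of G induced by N^{≤r}(v) contains an odd cycle of length at most 2r+1. -/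
/-!
Going once around an odd closed walk, the parity of the distance from `v` cannot change along
every edge, so some edge `xy` of the walk has `d(v,x) ≡ d(v,y) mod 2`. Shortest walks from `v`
to `x` and to `y`, closed up by `xy`, form an odd closed walk of length at most `2r + 1` inside
the ball, and every odd closed walk contains an odd cycle on its vertices of no greater length.
-/

namespace SimpleGraph.Walk

variable {V : Type*} {G : SimpleGraph V}

lemma exists_length_add_of_isSubwalk {u y : V} {w : G.Walk u u} {q : G.Walk y y}
    (hq : q.IsSubwalk w) :
    ∃ w' : G.Walk u u, w'.length + q.length = w.length ∧ w'.support ⊆ w.support := by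
  obtain ⟨ru, rv, rfl⟩ := hq
  refine ⟨ru.append rv, by simp only [length_append]; omega, fun x hx => ?_⟩
  simp only [mem_support_append_iff] at hx ⊢
  tauto

theorem exists_isCycle_odd_length_le {u : V} (w : G.Walk u u) (hw : Odd w.length) :
    ∃ (u' : V) (c : G.Walk u' u'), c.IsCycle ∧ Odd c.length ∧ c.length ≤ w.length ∧
      c.support ⊆ w.support := by
  -- If the tail of `w` is not a path, a closed subwalk of it cuts `w` into two shorter closed
  -- walks, one of which is odd.
  induction hn : w.length using Nat.strong_induction_on generalizing u with
  | _ n ih =>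
  subst hn
  by_cases htail : w.tail.IsPath
  · have hne : w.length ≠ 1 := fun h => G.loopless.irrefl u (adj_of_length_eq_one h)
    have hcyc : w.IsCycle := isCycle_iff_isPath_tail_and_le_length.mpr
      ⟨htail, by obtain ⟨k, hk⟩ := hw; omega⟩
    exact ⟨u, w, hcyc, hw, le_rfl, List.Subset.refl _⟩
  obtain ⟨y, q, hq, hq_nil⟩ : ∃ (y : V) (q : G.Walk y y), q.IsSubwalk w.tail ∧ ¬ q.Nil := by
    simpa [isPath_iff_isSubwalk_imp_nil] using htail
  have hq_pos : 0 < q.length := not_nil_iff_lt_length.mp hq_nil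
  have hq_lt : q.length < w.length := by
    have := length_le_of_isSubwalk hq
    rw [length_tail] at this
    omega
  have hq_sub : q.IsSubwalk w := hq.trans (isSubwalk_rfl w).tail
  obtain ⟨w', hw'_len, hw'_supp⟩ := exists_length_add_of_isSubwalk hq_sub
  rcases Nat.even_or_odd q.length with hq_even | hq_odd
  · have hw'_odd : Odd w'.length := by
      rw [← hw'_len, Nat.odd_add] at hw
      exact hw.mpr hq_even
    obtain ⟨u', c, hc, hc_odd, hc_len, hc_supp⟩ := ih _ (by omega) w' hw'_odd rfl
    exact ⟨u', c, hc, hc_odd, by omega, List.Subset.trans hc_supp hw'_supp⟩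
  · obtain ⟨u', c, hc, hc_odd, hc_len, hc_supp⟩ := ih _ hq_lt q hq_odd rfl
    exact ⟨u', c, hc, hc_odd, by omega,
      List.Subset.trans hc_supp hq_sub.support_subset⟩

lemma even_add_length_iff_of_forall_darts (f : V → ℕ) {a b : V} (w : G.Walk a b)
    (hw : ∀ d ∈ w.darts, ¬ Even (f d.fst + f d.snd)) :
    Even (f a + w.length) ↔ Even (f b) := by
  induction w with
  | nil => simp
  | cons h p ih =>
    have hstep := hw _ List.mem_cons_self
    have := ih fun d hd => hw d (List.mem_cons_of_mem _ hd)
    simp only [length_cons] at hstep this ⊢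
    rw [← this]
    simp only [Nat.even_add, Nat.even_add_one] at hstep ⊢
    tauto

lemma exists_dart_even_add_of_odd_length (f : V → ℕ) {u : V} (w : G.Walk u u)
    (hw : Odd w.length) : ∃ d ∈ w.darts, Even (f d.fst + f d.snd) := by
  by_contra! h
  have := even_add_length_iff_of_forall_darts f w h
  rw [Nat.even_add] at this
  exact Nat.not_even_iff_odd.mpr hw (by tauto)

lemma exists_short_odd_closed_walk_of_odd_in_ball {u v : V} {r : ℕ} (c : G.Walk u u)
    (hodd : Odd c.length) (hball : ∀ x ∈ c.support, ∃ p : G.Walk v x, p.length ≤ r) :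
    ∃ w : G.Walk v v, Odd w.length ∧ w.length ≤ 2 * r + 1 ∧
      ∀ x ∈ w.support, ∃ p : G.Walk v x, p.length ≤ r := by
  classical
  have exists_shortest :
      ∀ x ∈ c.support, ∃ p : G.Walk v x, p.length = G.dist v x ∧ p.length ≤ r := by
    intro x hx
    obtain ⟨p, hp⟩ := hball x hx
    obtain ⟨q, hq⟩ := p.reachable.exists_walk_length_eq_dist
    exact ⟨q, hq, hq ▸ (dist_le p).trans hp⟩
  obtain ⟨d, hd, hpar⟩ := exists_dart_even_add_of_odd_length (G.dist v) c hodd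
  obtain ⟨P, hP, hPr⟩ := exists_shortest _ (c.dart_fst_mem_support_of_mem_darts hd)
  obtain ⟨Q, hQ, hQr⟩ := exists_shortest _ (c.dart_snd_mem_support_of_mem_darts hd)
  have hlen : (P.append (cons d.adj Q.reverse)).length = P.length + Q.length + 1 := by
    simp only [length_append, length_cons, length_reverse]
    omega
  refine ⟨P.append (cons d.adj Q.reverse), ?_, by omega, fun x hx => ?_⟩
  · rw [hlen, hP, hQ]
    exact hpar.add_one
  simp only [mem_support_append_iff, support_cons, List.mem_cons, support_reverse,
    List.mem_reverse] at hx
  rcases hx with hx | rfl | hx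
  · exact ⟨P.takeUntil x hx, (P.length_takeUntil_le_length hx).trans hPr⟩
  · exact ⟨P, hPr⟩
  · exact ⟨Q.takeUntil x hx, (Q.length_takeUntil_le_length hx).trans hQr⟩

end SimpleGraph.Walk

theorem odd_cycle_in_ball_general
    {V : Type*} (G : SimpleGraph V) (v : V) (r : ℕ)
    (u : V) (c : G.Walk u u) (hodd : Odd c.length)
    (hball : ∀ x ∈ c.support, ∃ p : G.Walk v x, p.length ≤ r) :
    ∃ (u' : V) (c' : G.Walk u' u'), c'.IsCycle ∧ Odd c'.length ∧
      c'.length ≤ 2 * r + 1 ∧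
      ∀ x ∈ c'.support, ∃ p : G.Walk v x, p.length ≤ r := by
  obtain ⟨w, hw_odd, hw_len, hw_ball⟩ := c.exists_short_odd_closed_walk_of_odd_in_ball hodd hball
  obtain ⟨u', c', hc', hc'_odd, hc'_len, hc'_supp⟩ := w.exists_isCycle_odd_length_le hw_odd
  exact ⟨u', c', hc', hc'_odd, hc'_len.trans hw_len, fun x hx => hw_ball x (hc'_supp hx)⟩

/-- If the ball of radius `r` around `v` (encoded: every vertex of
the cycle is joined to `v` by a walk of length at most `r`) contains an odd cycle,
then it contains an odd cycle of length at most `2r+1`. -/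
theorem odd_cycle_in_ball
    {V : Type*} (G : SimpleGraph V) (v : V) (r : ℕ) (hr : 1 ≤ r)
    (u : V) (c : G.Walk u u) (hc : c.IsCycle) (hodd : Odd c.length)
    (hball : ∀ x ∈ c.support, ∃ p : G.Walk v x, p.length ≤ r) :
    ∃ (u' : V) (c' : G.Walk u' u'), c'.IsCycle ∧ Odd c'.length ∧
      c'.length ≤ 2 * r + 1 ∧
      ∀ x ∈ c'.support, ∃ p : G.Walk v x, p.length ≤ r :=
  odd_cycle_in_ball_general G v r u c hodd hball
end

section
/- Let G be a simple graph, v a vertex of G, and r a positive integer. Let C be an odd cycle contained in the subgraph of G induced by the ball N^{≤r}(v) of all vertices at distance at most r from v, and suppose that the set of vertices of C at distance exactly r from v is an independent set of G. Then the subgraph of G induced by N^{≤r−1}(v) contains an odd cycle of length at most 2r−1. -/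
/-!
Adjacent vertices have distances from `v` differing by at most one, so if every edge of the odd
cycle `C` changed the distance from `v`, each edge would flip its parity and `C` would be even.
Hence some edge `xy` of `C` has `dist(v, x) = dist(v, y) = k`, and `k < r` because the vertices of
`C` at distance `r` are independent. Two shortest paths from `v` to `x` and `y` closed up by `xy`
form an odd closed walk of length `2k + 1 ≤ 2r - 1` inside the ball of radius `k`, and every odd
closed walk contains an odd cycle no longer than it on its own vertices.
-/

namespace SimpleGraph.Walk

variable {V : Type*} {G : SimpleGraph V}

lemma even_length_iff_of_forall_darts_odd (f : V → ℕ) :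
    ∀ {u v : V} (p : G.Walk u v), (∀ d ∈ p.darts, Odd (f d.fst + f d.snd)) →
      (Even p.length ↔ Even (f u + f v))
  | _, _, nil, _ => by simp [← two_mul]
  | _, _, cons h p, hp => by
    have hstep : Odd (f _ + f _) := hp _ List.mem_cons_self
    have ih := even_length_iff_of_forall_darts_odd f p fun d hd => hp d (List.mem_cons_of_mem _ hd)
    simp only [length_cons, Nat.even_iff, Nat.odd_iff] at hstep ih ⊢
    omega

lemma exists_dart_dist_eq_of_odd_length {u : V} (c : G.Walk u u) (hc : Odd c.length) (v : V) :
    ∃ d ∈ c.darts, G.dist v d.fst = G.dist v d.snd := by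
  by_contra! hne
  have hflip : ∀ d ∈ c.darts, Odd (G.dist v d.fst + G.dist v d.snd) := by
    intro d hd
    have := hne d hd
    rcases d.adj.diff_dist_adj (u := v) with h | h | h <;> rw [Nat.odd_iff] <;> omega
  have := (c.even_length_iff_of_forall_darts_odd (G.dist v) hflip).mpr (by simp [← two_mul])
  exact Nat.not_even_iff_odd.mpr hc this

lemma exists_eq_append_append_of_not_isPath :
    ∀ {u v : V} (p : G.Walk u v), ¬p.IsPath →
      ∃ (x : V) (q₁ : G.Walk u x) (c : G.Walk x x) (q₂ : G.Walk x v),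
        ¬c.Nil ∧ p = q₁.append (c.append q₂)
  | _, _, nil, hp => absurd IsPath.nil hp
  | u, _, cons h p, hp => by
    classical
    by_cases hpath : p.IsPath
    · have hu : u ∈ p.support := by simpa [cons_isPath_iff, hpath] using hp
      exact ⟨u, nil, cons h (p.takeUntil u hu), p.dropUntil u hu, not_nil_cons,
        by simp [p.take_spec hu]⟩
    · obtain ⟨x, q₁, c, q₂, hc, rfl⟩ := exists_eq_append_append_of_not_isPath p hpath
      exact ⟨x, cons h q₁, c, q₂, hc, rfl⟩

/-- Splitting at a repeated vertex writes an odd closed walk that is not a cycle as two shorter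
closed walks, one of which has odd length. -/
theorem exists_isCycle_odd_length_le_of_odd_length {u : V} (w : G.Walk u u)
    (hw : Odd w.length) :
    ∃ (x : V) (c : G.Walk x x), c.IsCycle ∧ Odd c.length ∧ c.length ≤ w.length ∧
      c.support ⊆ w.support := by
  induction hn : w.length using Nat.strong_induction_on generalizing u with
  | _ n ih =>
  subst hn
  cases w with
  | nil => simp at hw
  | cons h p =>
    by_cases hpath : p.IsPath
    · refine ⟨u, cons h p, (cons_isCycle_iff p h).mpr ⟨hpath, fun he => ?_⟩, hw, le_rfl,
        List.Subset.refl _⟩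
      have := hpath.length_eq_one_of_mem_edges (Sym2.eq_swap ▸ he)
      simp [this, Nat.odd_iff] at hw
    obtain ⟨x, q₁, c, q₂, hc, rfl⟩ := p.exists_eq_append_append_of_not_isPath hpath
    have hc₀ : 0 < c.length := not_nil_iff_lt_length.mp hc
    set c' : G.Walk x x := q₂.append (cons h q₁)
    have hsum : (cons h (q₁.append (c.append q₂))).length = c.length + c'.length := by
      simp only [c', length_cons, length_append]; omega
    have hsupp : c.support ⊆ (cons h (q₁.append (c.append q₂))).support := fun z hz => by
      simp [mem_support_append_iff, hz]
    have hsupp' : c'.support ⊆ (cons h (q₁.append (c.append q₂))).support := fun z hz => by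
      simp only [c', mem_support_append_iff, support_cons, List.mem_cons] at hz
      simp only [support_cons, List.mem_cons, mem_support_append_iff]
      tauto
    rcases Nat.even_or_odd c.length with he | ho
    · have ho' : Odd c'.length := by
        rw [hsum] at hw; exact (Nat.odd_add'.mp hw).mpr he
      obtain ⟨y, d, hd, hdo, hdl, hds⟩ := ih _ (by omega) c' ho' rfl
      exact ⟨y, d, hd, hdo, by omega, List.Subset.trans hds hsupp'⟩
    · have hc'₀ : 0 < c'.length := by simp [c']
      obtain ⟨y, d, hd, hdo, hdl, hds⟩ := ih _ (by omega) c ho rfl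
      exact ⟨y, d, hd, hdo, by omega, List.Subset.trans hds hsupp⟩

lemma exists_walk_length_le_of_mem_support {v x z : V} (p : G.Walk v x) (hz : z ∈ p.support) :
    ∃ q : G.Walk v z, q.length ≤ p.length := by
  classical
  exact ⟨p.takeUntil z hz, p.length_takeUntil_le_length hz⟩

end SimpleGraph.Walk

namespace SimpleGraph

variable {V : Type*} {G : SimpleGraph V}

lemma exists_odd_closed_walk_of_adj_of_dist_eq {v x y : V} (hx : G.Reachable v x)
    (hy : G.Reachable v y) (hxy : G.Adj x y) (hdist : G.dist v x = G.dist v y) :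
    ∃ w : G.Walk v v, w.length = 2 * G.dist v x + 1 ∧
      ∀ z ∈ w.support, ∃ p : G.Walk v z, p.length ≤ G.dist v x := by
  obtain ⟨p, hp⟩ := hx.exists_walk_length_eq_dist
  obtain ⟨q, hq⟩ := hy.exists_walk_length_eq_dist
  refine ⟨p.append (.cons hxy q.reverse), by simp [hp, hq, hdist]; omega, fun z hz => ?_⟩
  simp only [Walk.mem_support_append_iff, Walk.support_cons, List.mem_cons,
    Walk.support_reverse, List.mem_reverse] at hz
  rcases hz with hz | rfl | hz
  · exact hp ▸ p.exists_walk_length_le_of_mem_support hz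
  · exact ⟨p, hp.le⟩
  · exact hdist ▸ hq ▸ q.exists_walk_length_le_of_mem_support hz

end SimpleGraph

open SimpleGraph

theorem odd_cycle_in_smaller_ball_general
    {V : Type*} (G : SimpleGraph V) (v : V) (r : ℕ)
    (u : V) (c : G.Walk u u) (hodd : Odd c.length)
    (hball : ∀ x ∈ c.support, ∃ p : G.Walk v x, p.length ≤ r)
    (hindep : ∀ x ∈ c.support, ∀ y ∈ c.support,
      G.dist v x = r → G.dist v y = r → ¬ G.Adj x y) :
    ∃ (u' : V) (c' : G.Walk u' u'), c'.IsCycle ∧ Odd c'.length ∧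
      c'.length ≤ 2 * r - 1 ∧
      ∀ x ∈ c'.support, ∃ p : G.Walk v x, p.length ≤ r - 1 := by
  obtain ⟨d, hd, hdist⟩ := c.exists_dart_dist_eq_of_odd_length hodd v
  have hx := c.dart_fst_mem_support_of_mem_darts hd
  have hy := c.dart_snd_mem_support_of_mem_darts hd
  obtain ⟨px, hpx⟩ := hball _ hx
  obtain ⟨py, -⟩ := hball _ hy
  have hlt : G.dist v d.fst < r := by
    refine lt_of_le_of_ne ((dist_le px).trans hpx) fun heq => ?_
    exact hindep _ hx _ hy heq (hdist ▸ heq) d.adj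
  obtain ⟨w, hwlen, hwball⟩ :=
    exists_odd_closed_walk_of_adj_of_dist_eq ⟨px⟩ ⟨py⟩ d.adj hdist
  obtain ⟨u', c', hcyc, hodd', hlen, hsupp⟩ :=
    w.exists_isCycle_odd_length_le_of_odd_length (by rw [hwlen]; exact odd_two_mul_add_one _)
  refine ⟨u', c', hcyc, hodd', by omega, fun z hz => ?_⟩
  obtain ⟨p, hp⟩ := hwball z (hsupp hz)
  exact ⟨p, by omega⟩

/-- Let `C` be an odd cycle contained in the ball of radius `r`
around `v` (encoded: every vertex of `C` is joined to `v` by a walk of length at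
most `r`), and suppose the vertices of `C` at distance exactly `r` from `v` form an
independent set. Then the ball of radius `r-1` around `v` contains an odd cycle of
length at most `2r-1`. -/
theorem odd_cycle_in_smaller_ball
    {V : Type*} (G : SimpleGraph V) (v : V) (r : ℕ) (hr : 1 ≤ r)
    (u : V) (c : G.Walk u u) (hc : c.IsCycle) (hodd : Odd c.length)
    (hball : ∀ x ∈ c.support, ∃ p : G.Walk v x, p.length ≤ r)
    (hindep : ∀ x ∈ c.support, ∀ y ∈ c.support,
      G.dist v x = r → G.dist v y = r → ¬ G.Adj x y) :
    ∃ (u' : V) (c' : G.Walk u' u'), c'.IsCycle ∧ Odd c'.length ∧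
      c'.length ≤ 2 * r - 1 ∧
      ∀ x ∈ c'.support, ∃ p : G.Walk v x, p.length ≤ r - 1 :=
  odd_cycle_in_smaller_ball_general G v r u c hodd hball hindep
end

section
/- Let G be a simple graph, v a vertex of G, and let x and y be adjacent vertices of G with dist(v,x) = dist(v,y) = i for some finite i ≥ 1. Then G contains an odd cycle of length at most 2i+1 all of whose vertices are at distance at most i from v. -/
/-!
Going from `v` down a shortest path to `x`, across the edge `xy` and back up a shortest path
from `y` is a closed walk of odd length `2i + 1` inside the ball of radius `i` around `v`.
An odd closed walk that is not a cycle revisits a vertex, so it splits into two shorter closed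
walks, one of which is odd; by induction it contains an odd cycle on its own vertices.
-/

namespace SimpleGraph.Walk

variable {V : Type*} {G : SimpleGraph V}

lemma isCycle_cons_of_isPath {u v : V} (h : G.Adj u v) {p : G.Walk v u} (hp : p.IsPath)
    (hlen : 2 ≤ p.length) : (cons h p).IsCycle := by
  rw [isCycle_iff_isPath_tail_and_le_length]
  exact ⟨by simpa using hp, by simpa using hlen⟩

variable [DecidableEq V]

lemma exists_closed_walk_split_of_not_isPath {u v : V} (p : G.Walk u v) (hp : ¬p.IsPath) :
    ∃ (z : V) (c : G.Walk z z) (q : G.Walk u v), 0 < c.length ∧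
      c.length + q.length = p.length ∧ c.support ⊆ p.support ∧ q.support ⊆ p.support := by
  induction p with
  | nil => exact absurd IsPath.nil hp
  | @cons u w v h p ih =>
    by_cases hpath : p.IsPath
    · have hu : u ∈ p.support := by simpa [cons_isPath_iff, hpath] using hp
      have hsplit := congrArg length (p.take_spec hu)
      rw [length_append] at hsplit
      refine ⟨u, cons h (p.takeUntil u hu), p.dropUntil u hu, by simp, ?_, ?_, ?_⟩
      · simp only [length_cons]
        omega
      · exact List.cons_subset_cons _ (p.support_takeUntil_subset_support hu)
      · exact List.Subset.trans (p.support_dropUntil_subset_support hu) (List.subset_cons_self _ _)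
    · obtain ⟨z, c, q, hc, hlen, hcs, hqs⟩ := ih hpath
      refine ⟨z, c, cons h q, hc, by simp [← hlen, Nat.add_assoc], ?_, ?_⟩
      · exact List.Subset.trans hcs (List.subset_cons_self _ _)
      · exact List.cons_subset_cons _ hqs

theorem exists_isCycle_odd_of_odd_length {u : V} (w : G.Walk u u) (hw : Odd w.length) :
    ∃ (a : V) (c : G.Walk a a), c.IsCycle ∧ Odd c.length ∧ c.length ≤ w.length ∧
      c.support ⊆ w.support := by
  obtain ⟨n, hn⟩ : ∃ n, w.length = n := ⟨_, rfl⟩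
  induction n using Nat.strong_induction_on generalizing u w with
  | _ n ih =>
    cases w with
    | nil => simp at hw
    | @cons u b _ h p =>
      rw [length_cons] at hn
      by_cases hp : p.IsPath
      · have hp0 : p.length ≠ 0 := fun h0 ↦ h.ne (p.eq_of_length_eq_zero h0).symm
        refine ⟨u, cons h p, isCycle_cons_of_isPath h hp ?_, hw, le_rfl, List.Subset.refl _⟩
        rw [length_cons, Nat.odd_iff] at hw
        omega
      · obtain ⟨z, c, q, hc, hlen, hcs, hqs⟩ := p.exists_closed_walk_split_of_not_isPath hp
        have hsub : (cons h q).support ⊆ (cons h p).support := List.cons_subset_cons _ hqs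
        rcases Nat.even_or_odd c.length with hce | hco
        · have hqo : Odd (cons h q).length := by
            rw [Nat.even_iff] at hce
            rw [length_cons, Nat.odd_iff] at hw ⊢
            omega
          obtain ⟨a, d, hd, hdo, hdl, hds⟩ :=
            ih _ (by simp only [length_cons]; omega) (cons h q) hqo rfl
          exact ⟨a, d, hd, hdo, by simp only [length_cons] at hdl ⊢; omega,
            List.Subset.trans hds hsub⟩
        · obtain ⟨a, d, hd, hdo, hdl, hds⟩ := ih _ (by omega) c hco rfl
          exact ⟨a, d, hd, hdo, by simp only [length_cons]; omega,
            List.Subset.trans hds (List.Subset.trans hcs (List.subset_cons_self _ _))⟩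

end SimpleGraph.Walk

open SimpleGraph

theorem adjacent_in_same_bfs_layer_gives_short_odd_cycle_general
    {V : Type*} (G : SimpleGraph V) (v x y : V) (i : ℕ)
    (hadj : G.Adj x y)
    (hx : G.Reachable v x) (hdx : G.dist v x = i)
    (hy : G.Reachable v y) (hdy : G.dist v y = i) :
    ∃ (u : V) (c : G.Walk u u), c.IsCycle ∧ Odd c.length ∧
      c.length ≤ 2 * i + 1 ∧
      ∀ z ∈ c.support, ∃ p : G.Walk v z, p.length ≤ i := by
  classical
  obtain ⟨p, hp⟩ := hx.exists_walk_length_eq_dist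
  obtain ⟨q, hq⟩ := hy.exists_walk_length_eq_dist
  let w : G.Walk v v := p.append (Walk.cons hadj q.reverse)
  have hw : w.length = 2 * i + 1 := by
    simp only [w, Walk.length_append, Walk.length_cons, Walk.length_reverse, hp, hq, hdx, hdy]
    omega
  obtain ⟨u, c, hc, hco, hcl, hcs⟩ :=
    w.exists_isCycle_odd_of_odd_length (hw ▸ odd_two_mul_add_one i)
  refine ⟨u, c, hc, hco, hw ▸ hcl, fun z hz ↦ ?_⟩
  have hzw : z ∈ p.support ∨ z = x ∨ z ∈ q.support := by simpa [w] using hcs hz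
  rcases hzw with hzp | rfl | hzq
  · exact ⟨p.takeUntil z hzp, hdx ▸ hp ▸ p.length_takeUntil_le_length hzp⟩
  · exact ⟨p, (hp.trans hdx).le⟩
  · exact ⟨q.takeUntil z hzq, hdy ▸ hq ▸ q.length_takeUntil_le_length hzq⟩

/-- If `x` and `y` are adjacent and both at distance exactly
`i ≥ 1` from `v`, then `G` contains an odd cycle of length at most `2i+1` all of
whose vertices are at distance at most `i` from `v`. -/
theorem adjacent_in_same_bfs_layer_gives_short_odd_cycle
    {V : Type*} (G : SimpleGraph V) (v x y : V) (i : ℕ) (hi : 1 ≤ i)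
    (hadj : G.Adj x y)
    (hx : G.Reachable v x) (hdx : G.dist v x = i)
    (hy : G.Reachable v y) (hdy : G.dist v y = i) :
    ∃ (u : V) (c : G.Walk u u), c.IsCycle ∧ Odd c.length ∧
      c.length ≤ 2 * i + 1 ∧
      ∀ z ∈ c.support, ∃ p : G.Walk v z, p.length ≤ i :=
  adjacent_in_same_bfs_layer_gives_short_odd_cycle_general G v x y i hadj hx hdx hy hdy
end
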